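/- Gromov hyperbolicity is a quasi-isometry invariant among geodesic metric spaces: if X and Y are geodesic metric spaces, X is δ-hyperbolic for some δ, and there is a quasi-isometry from X to Y, then Y is δ′-hyperbolic for some constant δ′. -/

import Mathlib

/-
A quasi-isometry `f : X → Y` has a coarse inverse `g : Y → X`, a quasi-isometric embedding.
Sampling a geodesic of `Y` at integer times and applying `g` gives a quasi-geodesic chain in `X`,
and by the Morse lemma such a chain and any geodesic of `X` joining its ends are within bounded
distance `R` of each other. So a geodesic triangle of `Y` is carried by `g` to within `R` of a
`δ`-thin geodesic triangle of `X`, and the lower quasi-isometry bound pulls thinness back to `Y`.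

The Morse lemma follows Bridson–Haefliger III.H.1.7. Bisecting, a geodesic joining the ends of a
chain of `m` steps of size `D` stays within `δ ⌈log₂ m⌉ + D` of the chain. Applied around a point
of the geodesic farthest from the chain, at distance `Δ`, this gives
`Δ ≤ 2δ + D + δ ⌈log₂ (6λΔ + Λ)⌉`, which bounds `Δ`. Conversely, every chain point is close to
the geodesic because the geodesic is connected.
-/

open Set

/-- A unit-speed geodesic from `x` to `y`, defined on `[0, dist x y]`. -/
def IsGeodesicFromTo {X : Type*} [MetricSpace X] (γ : ℝ → X) (x y : X) : Prop :=
  γ 0 = x ∧ γ (dist x y) = y ∧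
    ∀ s ∈ Icc 0 (dist x y), ∀ t ∈ Icc 0 (dist x y), dist (γ s) (γ t) = |s - t|

/-- A geodesic metric space: every pair of points is joined by a geodesic. -/
def GeodesicSpace (X : Type*) [MetricSpace X] : Prop :=
  ∀ x y : X, ∃ γ : ℝ → X, IsGeodesicFromTo γ x y

/-- The geodesic segment from `x` to `y` traced by `γ`. -/
def geodSeg {X : Type*} [MetricSpace X] (γ : ℝ → X) (x y : X) : Set X :=
  γ '' Icc 0 (dist x y)

/-- Every geodesic triangle in `X` is `δ`-thin: each side is contained in the
`δ`-neighborhood of the union of the other two sides. -/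
def ThinTriangles (X : Type*) [MetricSpace X] (δ : ℝ) : Prop :=
  ∀ (x y z : X) (γ₁ γ₂ γ₃ : ℝ → X),
    IsGeodesicFromTo γ₁ x y → IsGeodesicFromTo γ₂ y z → IsGeodesicFromTo γ₃ z x →
    ∀ p ∈ geodSeg γ₁ x y, ∃ q ∈ geodSeg γ₂ y z ∪ geodSeg γ₃ z x, dist p q ≤ δ

/-- A quasi-isometry between metric spaces. -/
def IsQuasiIsometry {X Y : Type*} [MetricSpace X] [MetricSpace Y]
    (f : X → Y) : Prop :=
  ∃ lam C : ℝ, 1 ≤ lam ∧ 0 ≤ C ∧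
    (∀ x x' : X,
      lam⁻¹ * dist x x' - C ≤ dist (f x) (f x') ∧
      dist (f x) (f x') ≤ lam * dist x x' + C) ∧
    ∀ y : Y, ∃ x : X, dist y (f x) ≤ C

open Metric

section Geodesic

variable {X : Type*} [MetricSpace X] {γ : ℝ → X} {x y : X}

namespace IsGeodesicFromTo

theorem lipschitzOnWith (hγ : IsGeodesicFromTo γ x y) :
    LipschitzOnWith 1 γ (Icc 0 (dist x y)) :=
  LipschitzOnWith.of_dist_le_mul fun s hs t ht => by
    rw [hγ.2.2 s hs t ht, Real.dist_eq, NNReal.coe_one, one_mul]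

theorem isPreconnected_geodSeg (hγ : IsGeodesicFromTo γ x y) :
    IsPreconnected (geodSeg γ x y) :=
  isPreconnected_Icc.image γ hγ.lipschitzOnWith.continuousOn

theorem left_mem_geodSeg (hγ : IsGeodesicFromTo γ x y) : x ∈ geodSeg γ x y :=
  ⟨0, ⟨le_rfl, dist_nonneg⟩, hγ.1⟩

theorem right_mem_geodSeg (hγ : IsGeodesicFromTo γ x y) : y ∈ geodSeg γ x y :=
  ⟨dist x y, ⟨dist_nonneg, le_rfl⟩, hγ.2.1⟩

theorem dist_le_of_mem_geodSeg (hγ : IsGeodesicFromTo γ x y) {z : X}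
    (hz : z ∈ geodSeg γ x y) : dist x z ≤ dist x y ∧ dist z y ≤ dist x y := by
  obtain ⟨t, ht, rfl⟩ := hz
  have h0 := hγ.2.2 0 ⟨le_rfl, dist_nonneg⟩ t ht
  have hd := hγ.2.2 t ht (dist x y) ⟨dist_nonneg, le_rfl⟩
  rw [hγ.1] at h0
  rw [hγ.2.1] at hd
  rw [h0, hd, zero_sub, abs_neg, abs_of_nonneg ht.1, abs_of_nonpos (by linarith [ht.2])]
  constructor <;> linarith [ht.1, ht.2]

theorem exists_reverse (hγ : IsGeodesicFromTo γ x y) :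
    ∃ γ' : ℝ → X, IsGeodesicFromTo γ' y x ∧ geodSeg γ' y x = geodSeg γ x y := by
  have hmem : ∀ {t}, t ∈ Icc 0 (dist y x) → dist x y - t ∈ Icc 0 (dist x y) := fun ht => by
    rw [dist_comm] at ht
    exact ⟨by linarith [ht.2], by linarith [ht.1]⟩
  refine ⟨fun t => γ (dist x y - t), ⟨by simpa using hγ.2.1, ?_, ?_⟩, ?_⟩
  · simpa [dist_comm] using hγ.1
  · intro s hs t ht
    rw [hγ.2.2 _ (hmem hs) _ (hmem ht), abs_sub_comm]
    ring_nf
  · simp only [geodSeg, dist_comm y x]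
    rw [← image_image γ (dist x y - ·), image_const_sub_Icc, sub_self, sub_zero]

theorem exists_restrict (hγ : IsGeodesicFromTo γ x y) {s t : ℝ} (hs : 0 ≤ s) (hst : s ≤ t)
    (ht : t ≤ dist x y) :
    ∃ γ' : ℝ → X, IsGeodesicFromTo γ' (γ s) (γ t) ∧ geodSeg γ' (γ s) (γ t) = γ '' Icc s t := by
  have hd : dist (γ s) (γ t) = t - s := by
    rw [hγ.2.2 s ⟨hs, hst.trans ht⟩ t ⟨hs.trans hst, ht⟩, abs_sub_comm,
      abs_of_nonneg (sub_nonneg.2 hst)]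
  have hmem : ∀ {u}, u ∈ Icc 0 (t - s) → s + u ∈ Icc 0 (dist x y) := fun hu =>
    ⟨by linarith [hu.1], by linarith [hu.2]⟩
  refine ⟨fun u => γ (s + u), ⟨by simp, by simp [hd], ?_⟩, ?_⟩
  · intro u hu v hv
    rw [hd] at hu hv
    rw [hγ.2.2 _ (hmem hu) _ (hmem hv)]
    ring_nf
  · simp only [geodSeg, hd]
    rw [← image_image γ (s + ·), image_const_add_Icc, add_zero, add_sub_cancel]

theorem exists_isMaxOn_infDist (hγ : IsGeodesicFromTo γ x y) (K : Set X) :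
    ∃ t₀ ∈ Icc 0 (dist x y), IsMaxOn (fun t => infDist (γ t) K) (Icc 0 (dist x y)) t₀ :=
  isCompact_Icc.exists_isMaxOn ⟨0, le_rfl, dist_nonneg⟩
    ((continuous_infDist_pt K).comp_continuousOn hγ.lipschitzOnWith.continuousOn)

end IsGeodesicFromTo

end Geodesic

namespace ThinTriangles

variable {X : Type*} [MetricSpace X] {δ : ℝ} {γ β₁ β₂ β₃ : ℝ → X} {x y z a b p : X}

theorem exists_dist_le_of_mem_geodSeg (h : ThinTriangles X δ) (hγ : IsGeodesicFromTo γ x y)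
    (h₁ : IsGeodesicFromTo β₁ x z) (h₂ : IsGeodesicFromTo β₂ z y) (hp : p ∈ geodSeg γ x y) :
    ∃ q ∈ geodSeg β₁ x z ∪ geodSeg β₂ z y, dist p q ≤ δ := by
  obtain ⟨β₁', h₁', hseg₁⟩ := h₁.exists_reverse
  obtain ⟨β₂', h₂', hseg₂⟩ := h₂.exists_reverse
  obtain ⟨q, hq, hpq⟩ := h x y z γ β₂' β₁' hγ h₂' h₁' p hp
  rw [hseg₁, hseg₂, union_comm] at hq
  exact ⟨q, hq, hpq⟩

theorem exists_dist_le_two_mul_of_mem_geodSeg (h : ThinTriangles X δ) (hX : GeodesicSpace X)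
    (hδ : 0 ≤ δ) (hγ : IsGeodesicFromTo γ x y) (h₁ : IsGeodesicFromTo β₁ x a)
    (h₂ : IsGeodesicFromTo β₂ a b) (h₃ : IsGeodesicFromTo β₃ b y) (hp : p ∈ geodSeg γ x y) :
    ∃ q ∈ geodSeg β₁ x a ∪ geodSeg β₂ a b ∪ geodSeg β₃ b y, dist p q ≤ 2 * δ := by
  obtain ⟨μ, hμ⟩ := hX x b
  obtain ⟨q, hq | hq, hpq⟩ := h.exists_dist_le_of_mem_geodSeg hγ hμ h₃ hp
  · obtain ⟨q', hq', hqq'⟩ := h.exists_dist_le_of_mem_geodSeg hμ h₁ h₂ hq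
    exact ⟨q', Or.inl hq', by linarith [dist_triangle p q q']⟩
  · exact ⟨q, Or.inr hq, by linarith⟩

end ThinTriangles

section Chain

variable {X : Type*} [MetricSpace X] {δ D lam Λ : ℝ} {n : ℕ} {c : ℕ → X}

structure IsQuasiGeodesicChain (c : ℕ → X) (n : ℕ) (D lam Λ : ℝ) : Prop where
  dist_succ_le : ∀ i < n, dist (c i) (c (i + 1)) ≤ D
  abs_sub_le : ∀ i ≤ n, ∀ j ≤ n, |(i : ℝ) - j| ≤ lam * dist (c i) (c j) + Λ

namespace IsQuasiGeodesicChain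

theorem natDist_le (hc : IsQuasiGeodesicChain c n D lam Λ) {i j : ℕ} (hi : i ≤ n) (hj : j ≤ n) :
    (i.dist j : ℝ) ≤ lam * dist (c i) (c j) + Λ := by
  convert hc.abs_sub_le i hi j hj using 1
  rcases le_total i j with hij | hji
  · rw [Nat.dist_eq_sub_of_le hij, Nat.cast_sub hij, abs_sub_comm,
      abs_of_nonneg (sub_nonneg.2 (Nat.cast_le.2 hij))]
  · rw [Nat.dist_eq_sub_of_le_right hji, Nat.cast_sub hji,
      abs_of_nonneg (sub_nonneg.2 (Nat.cast_le.2 hji))]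

theorem dist_le_mul (hc : IsQuasiGeodesicChain c n D lam Λ) {i j : ℕ} (hij : i ≤ j) (hj : j ≤ n) :
    dist (c i) (c j) ≤ D * (j - i : ℕ) := by
  have := dist_le_Ico_sum_of_dist_le (f := c) hij (d := fun _ => D)
    fun _ hk => hc.dist_succ_le _ (hk.trans_le hj)
  rwa [Finset.sum_const, Nat.card_Ico, nsmul_eq_mul, mul_comm] at this

theorem dist_le_of_le_of_le (hc : IsQuasiGeodesicChain c n D lam Λ) (hD : 0 ≤ D) {i j k : ℕ}
    (hij : i ≤ j) (hjk : j ≤ k) (hk : k ≤ n) :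
    dist (c i) (c j) ≤ D * (lam * dist (c i) (c k) + Λ) :=
  calc dist (c i) (c j) ≤ D * (j - i : ℕ) := hc.dist_le_mul hij (hjk.trans hk)
    _ ≤ D * (i.dist k : ℝ) := by
      rw [Nat.dist_eq_sub_of_le (hij.trans hjk)]
      gcongr
    _ ≤ D * (lam * dist (c i) (c k) + Λ) := by
      gcongr
      exact hc.natDist_le (hij.trans (hjk.trans hk)) hk

end IsQuasiGeodesicChain

theorem exists_dist_le_clog_of_mem_geodSeg (hX : GeodesicSpace X) (hthin : ThinTriangles X δ)
    (hD : 0 ≤ D) {a b : ℕ} (hab : a ≤ b) (hc : ∀ i ∈ Ico a b, dist (c i) (c (i + 1)) ≤ D)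
    {γ : ℝ → X} (hγ : IsGeodesicFromTo γ (c a) (c b)) {p : X} (hp : p ∈ geodSeg γ (c a) (c b)) :
    ∃ i ∈ Icc a b, dist p (c i) ≤ δ * Nat.clog 2 (b - a) + D := by
  induction hk : b - a using Nat.strong_induction_on generalizing a b γ p with
  | _ k ih =>
  rcases lt_or_ge k 2 with hk2 | hk2
  · have hab' : dist (c a) (c b) ≤ D := by
      obtain rfl | rfl : b = a ∨ b = a + 1 := by omega
      · simpa using hD
      · exact hc a ⟨le_rfl, lt_add_one a⟩
    refine ⟨a, ⟨le_rfl, hab⟩, ?_⟩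
    rw [Nat.clog_of_right_le_one (by omega), Nat.cast_zero, mul_zero, zero_add, dist_comm]
    exact (hγ.dist_le_of_mem_geodSeg hp).1.trans hab'
  · obtain ⟨β₁, hβ₁⟩ := hX (c a) (c (a + k / 2))
    obtain ⟨β₂, hβ₂⟩ := hX (c (a + k / 2)) (c b)
    obtain ⟨q, hq, hpq⟩ := hthin.exists_dist_le_of_mem_geodSeg hγ hβ₁ hβ₂ hp
    -- halving the index range costs one `δ` and lowers `clog 2` by one
    have hhalf : ∀ h ≤ k - k / 2, δ * Nat.clog 2 h + δ ≤ δ * Nat.clog 2 k := by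
      intro h hh
      have : Nat.clog 2 h + 1 ≤ Nat.clog 2 k := by
        rw [Nat.clog_of_two_le one_lt_two hk2]
        gcongr
        omega
      have : (Nat.clog 2 h : ℝ) + 1 ≤ Nat.clog 2 k := by exact_mod_cast this
      nlinarith [dist_nonneg.trans hpq]
    rcases hq with hq | hq
    · obtain ⟨i, ⟨hai, hia⟩, hqi⟩ := ih (k / 2) (by omega) (by omega)
        (fun i hi => hc i ⟨hi.1, by have := hi.2; omega⟩) hβ₁ hq (by omega)
      exact ⟨i, ⟨hai, by omega⟩, by linarith [dist_triangle p q (c i), hhalf (k / 2) (by omega)]⟩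
    · obtain ⟨i, ⟨hai, hib⟩, hqi⟩ := ih (k - k / 2) (by omega) (by omega)
        (fun i hi => hc i ⟨by have := hi.1; omega, hi.2⟩) hβ₂ hq (by omega)
      exact ⟨i, ⟨by omega, hib⟩, by linarith [dist_triangle p q (c i), hhalf (k - k / 2) le_rfl]⟩

theorem IsQuasiGeodesicChain.exists_geodesic_dist_le_clog (hc : IsQuasiGeodesicChain c n D lam Λ)
    (hX : GeodesicSpace X) (hthin : ThinTriangles X δ) (hD : 0 ≤ D) {i j : ℕ} (hi : i ≤ n)
    (hj : j ≤ n) :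
    ∃ ζ : ℝ → X, IsGeodesicFromTo ζ (c i) (c j) ∧
      ∀ z ∈ geodSeg ζ (c i) (c j), ∃ l ≤ n, dist z (c l) ≤ δ * Nat.clog 2 (i.dist j) + D := by
  rcases le_total i j with hij | hji
  · obtain ⟨ζ, hζ⟩ := hX (c i) (c j)
    refine ⟨ζ, hζ, fun z hz => ?_⟩
    obtain ⟨l, hl, hzl⟩ := exists_dist_le_clog_of_mem_geodSeg hX hthin hD hij
      (fun k hk => hc.dist_succ_le k (hk.2.trans_le hj)) hζ hz
    exact ⟨l, hl.2.trans hj, by rwa [Nat.dist_eq_sub_of_le hij]⟩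
  · obtain ⟨ζ, hζ⟩ := hX (c j) (c i)
    obtain ⟨ζ', hζ', hseg⟩ := hζ.exists_reverse
    refine ⟨ζ', hζ', fun z hz => ?_⟩
    obtain ⟨l, hl, hzl⟩ := exists_dist_le_clog_of_mem_geodSeg hX hthin hD hji
      (fun k hk => hc.dist_succ_le k (hk.2.trans_le hi)) hζ (hseg ▸ hz)
    exact ⟨l, hl.2.trans hi, by rwa [Nat.dist_eq_sub_of_le_right hji]⟩

end Chain

theorem Nat.clog_two_sq_le (m : ℕ) : Nat.clog 2 m ^ 2 ≤ 4 * m := by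
  have hsq : ∀ k : ℕ, k ^ 2 ≤ 2 ^ (k + 1) := by
    intro k
    induction k with
    | zero => norm_num
    | succ k ih =>
      have := Nat.lt_two_pow_self (n := k)
      have h2 : 2 ^ (k + 1 + 1) = 4 * 2 ^ k := by ring
      rw [pow_succ 2 k] at ih
      rw [h2]
      nlinarith
  rcases le_or_gt m 1 with hm | hm
  · simp [Nat.clog_of_right_le_one hm]
  · have hlt := Nat.pow_pred_clog_lt_self one_lt_two hm
    have hpos := Nat.clog_pos one_lt_two hm
    calc Nat.clog 2 m ^ 2 ≤ 2 ^ (Nat.clog 2 m + 1) := hsq _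
      _ = 4 * 2 ^ (Nat.clog 2 m).pred := by
        rw [← Nat.succ_pred_eq_of_pos hpos]; simp [pow_succ]; ring
      _ ≤ 4 * m := by omega

theorem le_add_mul_of_sq_le {x k a b c e : ℝ} (ha : 0 ≤ a) (hb : 0 ≤ b) (hc : 0 ≤ c)
    (he : 0 ≤ e) (hx : x ≤ a + b * k) (hk : k ^ 2 ≤ c * x + e) :
    x ≤ a + b * (c * b + c * a + e + 1) := by
  have hk' : k ≤ c * b + c * a + e + 1 := by
    rcases le_or_gt k 1 with h1 | h1
    · nlinarith [mul_nonneg hc hb, mul_nonneg hc ha]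
    · have : k * k ≤ (c * b + c * a + e) * k := by
        nlinarith [mul_le_mul_of_nonneg_left hx hc, mul_nonneg hc ha]
      nlinarith
  nlinarith [mul_le_mul_of_nonneg_left hk' hb]

section Morse

variable {X : Type*} [MetricSpace X] {δ D lam Λ Δ t₀ : ℝ} {n : ℕ} {c : ℕ → X} {γ : ℝ → X}

namespace IsGeodesicFromTo

theorem exists_le_near_chain (hγ : IsGeodesicFromTo γ (c 0) (c n))
    (hnear : ∀ t ∈ Icc 0 (dist (c 0) (c n)), ∃ i ≤ n, dist (γ t) (c i) ≤ Δ)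
    (ht₀ : t₀ ∈ Icc 0 (dist (c 0) (c n))) (hΔ : 0 ≤ Δ) :
    ∃ t ∈ Icc 0 t₀, ∃ i ≤ n, dist (γ t) (γ t₀) ≤ 2 * Δ ∧ dist (γ t) (c i) ≤ Δ ∧
      (dist (γ t) (γ t₀) = 2 * Δ ∨ dist (γ t) (c i) = 0) := by
  by_cases h : 2 * Δ ≤ t₀
  · have hmem : t₀ - 2 * Δ ∈ Icc 0 (dist (c 0) (c n)) := ⟨by linarith, by linarith [ht₀.2]⟩
    have hdist : dist (γ (t₀ - 2 * Δ)) (γ t₀) = 2 * Δ := by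
      rw [hγ.2.2 _ hmem _ ht₀, sub_sub_cancel_left, abs_neg, abs_of_nonneg (by linarith)]
    obtain ⟨i, hi, hγi⟩ := hnear _ hmem
    exact ⟨_, ⟨hmem.1, by linarith⟩, i, hi, hdist.le, hγi, Or.inl hdist⟩
  · have hdist : dist (γ 0) (γ t₀) = t₀ := by
      rw [hγ.2.2 0 ⟨le_rfl, dist_nonneg⟩ t₀ ht₀, zero_sub, abs_neg, abs_of_nonneg ht₀.1]
    refine ⟨0, ⟨le_rfl, ht₀.1⟩, 0, Nat.zero_le n, by linarith, ?_, Or.inr ?_⟩ <;> simp [hγ.1, hΔ]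

theorem exists_ge_near_chain (hγ : IsGeodesicFromTo γ (c 0) (c n))
    (hnear : ∀ t ∈ Icc 0 (dist (c 0) (c n)), ∃ i ≤ n, dist (γ t) (c i) ≤ Δ)
    (ht₀ : t₀ ∈ Icc 0 (dist (c 0) (c n))) (hΔ : 0 ≤ Δ) :
    ∃ t ∈ Icc t₀ (dist (c 0) (c n)), ∃ j ≤ n, dist (γ t) (γ t₀) ≤ 2 * Δ ∧ dist (γ t) (c j) ≤ Δ ∧
      (dist (γ t) (γ t₀) = 2 * Δ ∨ dist (γ t) (c j) = 0) := by
  by_cases h : t₀ + 2 * Δ ≤ dist (c 0) (c n)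
  · have hmem : t₀ + 2 * Δ ∈ Icc 0 (dist (c 0) (c n)) := ⟨by linarith [ht₀.1], h⟩
    have hdist : dist (γ (t₀ + 2 * Δ)) (γ t₀) = 2 * Δ := by
      rw [hγ.2.2 _ hmem _ ht₀, add_sub_cancel_left, abs_of_nonneg (by linarith)]
    obtain ⟨j, hj, hγj⟩ := hnear _ hmem
    exact ⟨_, ⟨by linarith, h⟩, j, hj, hdist.le, hγj, Or.inl hdist⟩
  · have hdist : dist (γ (dist (c 0) (c n))) (γ t₀) = dist (c 0) (c n) - t₀ := by
      rw [hγ.2.2 _ ⟨dist_nonneg, le_rfl⟩ t₀ ht₀, abs_of_nonneg (by linarith [ht₀.2])]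
    refine ⟨_, ⟨ht₀.2, le_rfl⟩, n, le_rfl, by linarith, ?_, Or.inr ?_⟩ <;> simp [hγ.2.1, hΔ]

end IsGeodesicFromTo

theorem IsQuasiGeodesicChain.exists_le_add_clog_of_farthest
    (hc : IsQuasiGeodesicChain c n D lam Λ) (hX : GeodesicSpace X) (hthin : ThinTriangles X δ)
    (hδ : 0 ≤ δ) (hD : 0 ≤ D) (hlam : 0 ≤ lam) (hΛ : 0 ≤ Λ) (hγ : IsGeodesicFromTo γ (c 0) (c n))
    (hnear : ∀ t ∈ Icc 0 (dist (c 0) (c n)), ∃ i ≤ n, dist (γ t) (c i) ≤ Δ)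
    (ht₀ : t₀ ∈ Icc 0 (dist (c 0) (c n))) (hfar : ∀ i ≤ n, Δ ≤ dist (γ t₀) (c i)) :
    ∃ m : ℕ, (m : ℝ) ≤ 6 * lam * Δ + Λ ∧ Δ ≤ 2 * δ + D + δ * Nat.clog 2 m := by
  have hΔ : 0 ≤ Δ := by
    obtain ⟨i, -, hi⟩ := hnear t₀ ht₀
    exact dist_nonneg.trans hi
  -- `z` on an outer side, from an anchor `y` to its chain point `w`, forces `Δ ≤ 2δ`,
  -- whether `y` is `2Δ` away from `γ t₀` or `y` lies on the chain
  have hside : ∀ {y w z : X}, Δ ≤ dist (γ t₀) w → dist (γ t₀) z ≤ 2 * δ →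
      dist y z ≤ dist y w → dist z w ≤ dist y w → dist y w ≤ Δ →
      (dist y (γ t₀) = 2 * Δ ∨ dist y w = 0) →
      ∃ m : ℕ, (m : ℝ) ≤ 6 * lam * Δ + Λ ∧ Δ ≤ 2 * δ + D + δ * Nat.clog 2 m := by
    intro y w z hw hz hyz hzw hyw hend
    refine ⟨0, by rw [Nat.cast_zero]; positivity, ?_⟩
    rw [Nat.clog_zero_right, Nat.cast_zero, mul_zero, add_zero]
    rcases hend with h | h
    · linarith [dist_triangle y z (γ t₀), dist_comm z (γ t₀)]
    · linarith [dist_triangle (γ t₀) z w]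
  obtain ⟨tm, htm, i, hi, htm₀, hγi, hi_end⟩ := hγ.exists_le_near_chain hnear ht₀ hΔ
  obtain ⟨tp, htp, j, hj, htp₀, hγj, hj_end⟩ := hγ.exists_ge_near_chain hnear ht₀ hΔ
  obtain ⟨γ', hγ', hseg⟩ := hγ.exists_restrict htm.1 (htm.2.trans htp.1) htp.2
  -- `γ t₀` lies on the subgeodesic from `γ tm` to `γ tp`, so it is `2δ`-close to the path
  -- `γ tm → c i → c j → γ tp`, whose middle side joins chain points only `6Δ` apart
  obtain ⟨β₁, hβ₁⟩ := hX (γ tm) (c i)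
  obtain ⟨ζ, hζ, hζnear⟩ := hc.exists_geodesic_dist_le_clog hX hthin hD hi hj
  obtain ⟨β₃, hβ₃⟩ := hX (c j) (γ tp)
  obtain ⟨z, (hz | hz) | hz, hpz⟩ := hthin.exists_dist_le_two_mul_of_mem_geodSeg hX hδ hγ' hβ₁
    hζ hβ₃ (hseg ▸ mem_image_of_mem γ (⟨htm.2, htp.1⟩ : t₀ ∈ Icc tm tp))
  · obtain ⟨hyz, hzw⟩ := hβ₁.dist_le_of_mem_geodSeg hz
    exact hside (hfar i hi) hpz hyz hzw hγi hi_end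
  · obtain ⟨l, hl, hzl⟩ := hζnear z hz
    refine ⟨i.dist j, ?_, by linarith [hfar l hl, dist_triangle (γ t₀) z (c l)]⟩
    have hij : dist (c i) (c j) ≤ 6 * Δ := by
      linarith [dist_triangle4 (c i) (γ tm) (γ tp) (c j), dist_triangle (γ tm) (γ t₀) (γ tp),
        dist_comm (c i) (γ tm), dist_comm (γ tp) (c j), dist_comm (γ tp) (γ t₀)]
    calc (i.dist j : ℝ) ≤ lam * dist (c i) (c j) + Λ := hc.natDist_le hi hj
      _ ≤ 6 * lam * Δ + Λ := by nlinarith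
  · obtain ⟨hwz, hzy⟩ := hβ₃.dist_le_of_mem_geodSeg hz
    simp only [dist_comm (c j)] at hwz hzy
    exact hside (hfar j hj) hpz (by rwa [dist_comm] at hzy) hwz hγj hj_end

theorem exists_forall_geodSeg_near_chain (hX : GeodesicSpace X) (hthin : ThinTriangles X δ)
    (hδ : 0 ≤ δ) (hD : 0 ≤ D) (hlam : 0 ≤ lam) (hΛ : 0 ≤ Λ) :
    ∃ R, 0 ≤ R ∧ ∀ {n : ℕ} {c : ℕ → X}, IsQuasiGeodesicChain c n D lam Λ →
      ∀ {γ : ℝ → X}, IsGeodesicFromTo γ (c 0) (c n) →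
        ∀ p ∈ geodSeg γ (c 0) (c n), ∃ i ≤ n, dist p (c i) ≤ R := by
  refine ⟨2 * δ + D + δ * (24 * lam * δ + 24 * lam * (2 * δ + D) + 4 * Λ + 1), by positivity, ?_⟩
  intro n c hc γ hγ
  set K := c '' Iic n
  have hnearest : ∀ x, ∃ i ≤ n, dist x (c i) = infDist x K := by
    intro x
    obtain ⟨_, ⟨i, hi, rfl⟩, h⟩ := ((finite_Iic n).image c).isCompact.exists_infDist_eq_dist
      ⟨c 0, 0, Nat.zero_le n, rfl⟩ x
    exact ⟨i, hi, h.symm⟩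
  obtain ⟨t₀, ht₀, hmax⟩ := hγ.exists_isMaxOn_infDist K
  have hnear : ∀ t ∈ Icc 0 (dist (c 0) (c n)), ∃ i ≤ n, dist (γ t) (c i) ≤ infDist (γ t₀) K :=
    fun t ht => let ⟨i, hi, h⟩ := hnearest (γ t); ⟨i, hi, h ▸ hmax ht⟩
  obtain ⟨m, hm, hΔ⟩ := hc.exists_le_add_clog_of_farthest hX hthin hδ hD hlam hΛ hγ hnear ht₀
    fun i hi => infDist_le_dist_of_mem ⟨i, hi, rfl⟩
  have hclog : ((Nat.clog 2 m : ℕ) : ℝ) ^ 2 ≤ 24 * lam * infDist (γ t₀) K + 4 * Λ := by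
    have : ((Nat.clog 2 m : ℕ) : ℝ) ^ 2 ≤ 4 * m := by exact_mod_cast Nat.clog_two_sq_le m
    linarith
  have hR := le_add_mul_of_sq_le (by positivity) hδ (by positivity) (by positivity) hΔ hclog
  rintro _ ⟨t, ht, rfl⟩
  obtain ⟨i, hi, hdi⟩ := hnearest (γ t)
  exact ⟨i, hi, hdi ▸ (hmax ht).trans hR⟩

theorem exists_forall_chain_near_geodSeg (hX : GeodesicSpace X) (hthin : ThinTriangles X δ)
    (hδ : 0 ≤ δ) (hD : 0 ≤ D) (hlam : 0 ≤ lam) (hΛ : 0 ≤ Λ) :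
    ∃ R, 0 ≤ R ∧ ∀ {n : ℕ} {c : ℕ → X}, IsQuasiGeodesicChain c n D lam Λ →
      ∀ {γ : ℝ → X}, IsGeodesicFromTo γ (c 0) (c n) →
        ∀ j ≤ n, ∃ q ∈ geodSeg γ (c 0) (c n), dist (c j) q ≤ R := by
  obtain ⟨R, hR, hnear⟩ := exists_forall_geodSeg_near_chain hX hthin hδ hD hlam hΛ
  refine ⟨D * (lam * (2 * R) + Λ) + R, by positivity, ?_⟩
  intro n c hc γ hγ j hj
  have hclosed : ∀ s : Set ℕ, s.Finite → IsClosed (⋃ i ∈ s, closedBall (c i) R) :=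
    fun s hs => hs.isClosed_biUnion fun _ _ => isClosed_closedBall
  have hcover : geodSeg γ (c 0) (c n) ⊆
      (⋃ i ∈ Iic j, closedBall (c i) R) ∪ ⋃ i ∈ Icc j n, closedBall (c i) R := by
    intro p hp
    obtain ⟨i, hi, hpi⟩ := hnear hc hγ p hp
    rcases le_total i j with hij | hji
    · exact Or.inl (mem_biUnion hij (mem_closedBall.2 hpi))
    · exact Or.inr (mem_biUnion ⟨hji, hi⟩ (mem_closedBall.2 hpi))
  -- the geodesic is connected, so some point `q` of it is `R`-close both to a chain point
  -- before `j` and to one after `j`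
  obtain ⟨q, hq, hq₁, hq₂⟩ := isPreconnected_closed_iff.1 hγ.isPreconnected_geodSeg _ _
    (hclosed _ (finite_Iic j)) (hclosed _ (finite_Icc j n)) hcover
    ⟨c 0, hγ.left_mem_geodSeg, mem_biUnion (Nat.zero_le j) (mem_closedBall_self hR)⟩
    ⟨c n, hγ.right_mem_geodSeg, mem_biUnion ⟨hj, le_rfl⟩ (mem_closedBall_self hR)⟩
  simp only [mem_iUnion, mem_closedBall, exists_prop] at hq₁ hq₂
  obtain ⟨i, hij, hqi⟩ := hq₁
  obtain ⟨k, ⟨hjk, hkn⟩, hqk⟩ := hq₂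
  have hik : dist (c i) (c k) ≤ 2 * R := by linarith [dist_triangle_left (c i) (c k) q]
  refine ⟨q, hq, ?_⟩
  calc dist (c j) q ≤ dist (c i) (c j) + dist (c i) q := dist_triangle_left _ _ _
    _ ≤ D * (lam * (2 * R) + Λ) + R := by
      gcongr
      · exact (hc.dist_le_of_le_of_le hD hij hjk hkn).trans (by gcongr)
      · rwa [dist_comm]

end Morse

section QuasiIsometry

variable {X Y : Type*} [MetricSpace X] [MetricSpace Y]

def IsQuasiIsometricEmbedding (g : Y → X) (μ K : ℝ) : Prop :=
  ∀ y y' : Y, dist (g y) (g y') ≤ μ * dist y y' + K ∧ dist y y' ≤ μ * dist (g y) (g y') + K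

theorem IsQuasiIsometry.exists_reverse_isQuasiIsometricEmbedding {f : X → Y}
    (hf : IsQuasiIsometry f) :
    ∃ (g : Y → X) (μ K : ℝ), 0 ≤ μ ∧ 0 ≤ K ∧ IsQuasiIsometricEmbedding g μ K := by
  obtain ⟨lam, C, hlam, hC, hf, hdense⟩ := hf
  choose g hg using hdense
  have hlam₀ : 0 < lam := zero_lt_one.trans_le hlam
  have hfg : ∀ y y', dist (f (g y)) (f (g y')) ≤ dist y y' + 2 * C ∧
      dist y y' ≤ dist (f (g y)) (f (g y')) + 2 * C := fun y y' => by
    constructor <;> linarith [dist_triangle4 (f (g y)) y y' (f (g y')),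
      dist_triangle4 y (f (g y)) (f (g y')) y', hg y, hg y', dist_comm y (f (g y)),
      dist_comm y' (f (g y'))]
  refine ⟨g, lam, 3 * lam * C, hlam₀.le, by positivity, fun y y' => ⟨?_, ?_⟩⟩
  · have h : lam⁻¹ * dist (g y) (g y') ≤ dist y y' + 3 * C := by
      linarith [(hf (g y) (g y')).1, (hfg y y').1]
    calc dist (g y) (g y') = lam * (lam⁻¹ * dist (g y) (g y')) := by field_simp
      _ ≤ lam * (dist y y' + 3 * C) := by gcongr
      _ = lam * dist y y' + 3 * lam * C := by ring
  · nlinarith [(hf (g y) (g y')).2, (hfg y y').2]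

theorem IsGeodesicFromTo.exists_isQuasiGeodesicChain {σ : ℝ → Y} {u v : Y}
    (hσ : IsGeodesicFromTo σ u v) :
    ∃ (n : ℕ) (c : ℕ → Y), IsQuasiGeodesicChain c n 1 1 2 ∧ c 0 = u ∧ c n = v ∧
      (∀ i, c i ∈ geodSeg σ u v) ∧ ∀ y ∈ geodSeg σ u v, ∃ i ≤ n, dist y (c i) ≤ 1 := by
  set L := dist u v
  have hL : 0 ≤ L := dist_nonneg
  have hmem : ∀ i : ℕ, min (i : ℝ) L ∈ Icc 0 L := fun i =>
    ⟨le_min i.cast_nonneg hL, min_le_right _ _⟩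
  have hdist : ∀ i j : ℕ, dist (σ (min (i : ℝ) L)) (σ (min (j : ℝ) L)) =
      |min (i : ℝ) L - min (j : ℝ) L| := fun i j => hσ.2.2 _ (hmem i) _ (hmem j)
  have hclamp : ∀ i ≤ ⌈L⌉₊, |(i : ℝ) - min (i : ℝ) L| ≤ 1 := by
    intro i hi
    have hceil := Nat.ceil_lt_add_one hL
    have hi' : (i : ℝ) ≤ ⌈L⌉₊ := by exact_mod_cast hi
    rw [abs_of_nonneg (sub_nonneg.2 (min_le_left _ _))]
    rcases le_total (i : ℝ) L with h | h
    · rw [min_eq_left h]; linarith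
    · rw [min_eq_right h]; linarith
  refine ⟨⌈L⌉₊, fun i => σ (min (i : ℝ) L), ⟨fun i _ => ?_, fun i hi j hj => ?_⟩,
    by simp [hL, hσ.1], by simpa [min_eq_right (Nat.le_ceil L)] using hσ.2.1,
    fun i => ⟨_, hmem i, rfl⟩, ?_⟩
  · rw [hdist]
    calc |min (i : ℝ) L - min ((i + 1 : ℕ) : ℝ) L|
        ≤ max |(i : ℝ) - (i + 1 : ℕ)| |L - L| := abs_min_sub_min_le_max _ _ _ _
      _ = 1 := by simp
  · rw [hdist, one_mul]
    calc |(i : ℝ) - j|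
        ≤ |(i : ℝ) - min (i : ℝ) L| + (|min (i : ℝ) L - min (j : ℝ) L| + |min (j : ℝ) L - j|) :=
          (abs_sub_le _ _ _).trans (add_le_add_right (abs_sub_le _ _ _) _)
      _ ≤ _ := by linarith [hclamp i hi, hclamp j hj, abs_sub_comm (min (j : ℝ) L) j]
  · rintro _ ⟨s, hs, rfl⟩
    refine ⟨⌊s⌋₊, (Nat.floor_mono hs.2).trans (Nat.floor_le_ceil L), ?_⟩
    have hfl : (⌊s⌋₊ : ℝ) ≤ L := (Nat.floor_le hs.1).trans hs.2
    show dist (σ s) (σ (min (⌊s⌋₊ : ℝ) L)) ≤ 1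
    rw [min_eq_left hfl, hσ.2.2 s hs _ ⟨Nat.cast_nonneg _, hfl⟩,
      abs_of_nonneg (sub_nonneg.2 (Nat.floor_le hs.1))]
    linarith [Nat.lt_floor_add_one s]

theorem IsQuasiGeodesicChain.comp {c : ℕ → Y} {n : ℕ} {D lam Λ μ K : ℝ} {g : Y → X}
    (hc : IsQuasiGeodesicChain c n D lam Λ) (hg : IsQuasiIsometricEmbedding g μ K) (hμ : 0 ≤ μ)
    (hlam : 0 ≤ lam) : IsQuasiGeodesicChain (g ∘ c) n (μ * D + K) (lam * μ) (lam * K + Λ) where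
  dist_succ_le i hi := (hg _ _).1.trans (by gcongr; exact hc.dist_succ_le i hi)
  abs_sub_le i hi j hj := (hc.abs_sub_le i hi j hj).trans <| by
    have := mul_le_mul_of_nonneg_left (hg (c i) (c j)).2 hlam
    simp only [Function.comp_apply]
    linarith

theorem IsQuasiIsometricEmbedding.exists_forall_near_geodSeg {g : Y → X} {μ K δ : ℝ}
    (hg : IsQuasiIsometricEmbedding g μ K) (hμ : 0 ≤ μ) (hK : 0 ≤ K) (hX : GeodesicSpace X)
    (hthin : ThinTriangles X δ) (hδ : 0 ≤ δ) :
    ∃ R, 0 ≤ R ∧ ∀ {u v : Y} {σ α : ℝ → _}, IsGeodesicFromTo σ u v →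
      IsGeodesicFromTo α (g u) (g v) →
        (∀ y ∈ geodSeg σ u v, ∃ q ∈ geodSeg α (g u) (g v), dist (g y) q ≤ R) ∧
        ∀ q ∈ geodSeg α (g u) (g v), ∃ y ∈ geodSeg σ u v, dist q (g y) ≤ R := by
  obtain ⟨R₁, hR₁, h₁⟩ := exists_forall_geodSeg_near_chain (D := μ * 1 + K) (lam := 1 * μ)
    (Λ := 1 * K + 2) hX hthin hδ (by positivity) (by positivity) (by positivity)
  obtain ⟨R₂, hR₂, h₂⟩ := exists_forall_chain_near_geodSeg (D := μ * 1 + K) (lam := 1 * μ)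
    (Λ := 1 * K + 2) hX hthin hδ (by positivity) (by positivity) (by positivity)
  refine ⟨R₁ + R₂ + μ + K, by positivity, fun {u v σ α} hσ hα => ?_⟩
  obtain ⟨n, c, hc, rfl, rfl, hcσ, hσc⟩ := hσ.exists_isQuasiGeodesicChain
  have hgc := hc.comp hg hμ zero_le_one
  constructor
  · intro y hy
    obtain ⟨i, hi, hyi⟩ := hσc y hy
    obtain ⟨q, hq, hiq⟩ := h₂ hgc hα i hi
    refine ⟨q, hq, ?_⟩
    have hiq : dist (g (c i)) q ≤ R₂ := hiq
    nlinarith [dist_triangle (g y) (g (c i)) q, (hg y (c i)).1, mul_le_mul_of_nonneg_left hyi hμ]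
  · intro q hq
    obtain ⟨i, -, hqi⟩ := h₁ hgc hα q hq
    exact ⟨c i, hcσ i, by linarith [show dist q (g (c i)) ≤ R₁ from hqi]⟩

end QuasiIsometry

theorem hyperbolicity_quasiIsometry_invariant_general {X Y : Type*}
    [MetricSpace X] [MetricSpace Y]
    (hX : GeodesicSpace X)
    (δ : ℝ) (hδ : 0 ≤ δ) (hthin : ThinTriangles X δ)
    (f : X → Y) (hf : IsQuasiIsometry f) :
    ∃ δ' : ℝ, 0 ≤ δ' ∧ ThinTriangles Y δ' := by
  obtain ⟨g, μ, K, hμ, hK, hg⟩ := hf.exists_reverse_isQuasiIsometricEmbedding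
  obtain ⟨R, hR, hnear⟩ := hg.exists_forall_near_geodSeg hμ hK hX hthin hδ
  refine ⟨μ * (2 * R + δ) + K, by positivity, ?_⟩
  intro u v w σ₁ σ₂ σ₃ hσ₁ hσ₂ hσ₃ p hp
  obtain ⟨α₁, hα₁⟩ := hX (g u) (g v)
  obtain ⟨α₂, hα₂⟩ := hX (g v) (g w)
  obtain ⟨α₃, hα₃⟩ := hX (g w) (g u)
  obtain ⟨q₁, hq₁, hpq₁⟩ := (hnear hσ₁ hα₁).1 p hp
  obtain ⟨q₂, hq₂, hq₁₂⟩ := hthin _ _ _ α₁ α₂ α₃ hα₁ hα₂ hα₃ q₁ hq₁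
  obtain ⟨y, hy, hq₂y⟩ : ∃ y ∈ geodSeg σ₂ v w ∪ geodSeg σ₃ w u, dist q₂ (g y) ≤ R := by
    rcases hq₂ with hq₂ | hq₂
    · obtain ⟨y, hy, h⟩ := (hnear hσ₂ hα₂).2 q₂ hq₂
      exact ⟨y, Or.inl hy, h⟩
    · obtain ⟨y, hy, h⟩ := (hnear hσ₃ hα₃).2 q₂ hq₂
      exact ⟨y, Or.inr hy, h⟩
  refine ⟨y, hy, (hg p y).2.trans ?_⟩
  gcongr
  linarith [dist_triangle4 (g p) q₁ q₂ (g y)]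

/-- Gromov hyperbolicity is a quasi-isometry invariant among geodesic metric
spaces: if `X` is `δ`-hyperbolic and there is a quasi-isometry `X → Y`, then
`Y` is `δ'`-hyperbolic for some constant `δ'`. -/
theorem hyperbolicity_quasiIsometry_invariant {X Y : Type*}
    [MetricSpace X] [MetricSpace Y]
    (hX : GeodesicSpace X) (hY : GeodesicSpace Y)
    (δ : ℝ) (hδ : 0 ≤ δ) (hthin : ThinTriangles X δ)
    (f : X → Y) (hf : IsQuasiIsometry f) :
    ∃ δ' : ℝ, 0 ≤ δ' ∧ ThinTriangles Y δ' :=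
  hyperbolicity_quasiIsometry_invariant_general hX δ hδ hthin f hf
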